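/- arXiv:0810.1973 — 2 statements merged into one kernel-verified Lean document; each statement's English description precedes it below -/
import Mathlib

section
/- Let Θ be a continuous function on the probability simplex Δ over a finite set 𝒳 of size n, and let p be a fixed probability vector on 𝒳. Then for any finite alphabet 𝒵, any distribution p' on 𝒵 and any family of probability vectors (q'(·|z))_{z∈𝒵} with Σ_z p'(z) q'(·|z) = p, there exist an alphabet 𝒵' with |𝒵'| ≤ n, a distribution p'' on 𝒵', and probability vectors (q''(·|z'))_{z'∈𝒵'} with Σ_{z'} p''(z') q''(·|z') = p and Σ_{z'} p''(z') Θ(q''(·|z')) ≤ Σ_z p'(z) Θ(q'(·|z)). -/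
open Finset

/-- Padding/reindexing: if the support of `p'` has at most `n` elements, the mixture can be
reindexed over `Fin n` (padding with zero weights), preserving everything. -/
private lemma stmt14_pad {𝒳 : Type} [Fintype 𝒳] {n : ℕ}
    (Θ : (𝒳 → ℝ) → ℝ)
    (p : 𝒳 → ℝ) (hp0 : ∀ x, 0 ≤ p x) (hp1 : ∑ x, p x = 1)
    {𝒵 : Type} [Fintype 𝒵] (p' : 𝒵 → ℝ) (hp'0 : ∀ z, 0 ≤ p' z) (hp'1 : ∑ z, p' z = 1)
    (q' : 𝒵 → 𝒳 → ℝ) (hq'0 : ∀ z x, 0 ≤ q' z x) (hq'1 : ∀ z, ∑ x, q' z x = 1)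
    (hmix : ∀ x, ∑ z, p' z * q' z x = p x)
    (hcard : Fintype.card {z // p' z ≠ 0} ≤ n) :
    ∃ (p'' : Fin n → ℝ) (q'' : Fin n → 𝒳 → ℝ),
      (∀ z, 0 ≤ p'' z) ∧ (∑ z, p'' z = 1) ∧
      (∀ z x, 0 ≤ q'' z x) ∧ (∀ z, ∑ x, q'' z x = 1) ∧
      (∀ x, ∑ z, p'' z * q'' z x = p x) ∧
      ∑ z, p'' z * Θ (q'' z) ≤ ∑ z, p' z * Θ (q' z) := by
  classical
  obtain ⟨e⟩ : Nonempty ({z // p' z ≠ 0} ↪ Fin n) :=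
    Function.Embedding.nonempty_of_card_le (by simpa using hcard)
  set P : Fin n → ℝ := Function.extend e (fun z => p' z.1) 0 with hP
  set Q : Fin n → 𝒳 → ℝ := Function.extend e (fun z => q' z.1) (fun _ => p) with hQ
  have hPe : ∀ z : {z // p' z ≠ 0}, P (e z) = p' z.1 := fun z => e.injective.extend_apply _ _ z
  have hQe : ∀ z : {z // p' z ≠ 0}, Q (e z) = q' z.1 := fun z => e.injective.extend_apply _ _ z
  -- key sum identity
  have hsum : ∀ (A : Fin n → ℝ) (a : 𝒵 → ℝ), (∀ z : {z // p' z ≠ 0}, A (e z) = a z.1) →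
      ∑ i, P i * A i = ∑ z, p' z * a z := by
    intro A a ha
    have h1 : ∑ i, P i * A i = ∑ i ∈ univ.image e, P i * A i := by
      refine (Finset.sum_subset (subset_univ _) ?_).symm
      intro i _ hi
      have hni : ¬∃ z, e z = i := by simpa [Finset.mem_image] using hi
      simp [hP, Function.extend_apply' _ _ _ hni]
    rw [h1, Finset.sum_image (fun a _ b _ h => e.injective h)]
    have h2 : ∑ z : {z // p' z ≠ 0}, P (e z) * A (e z)
        = ∑ z : {z // p' z ≠ 0}, p' z.1 * a z.1 :=
      Finset.sum_congr rfl fun z _ => by rw [hPe, ha]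
    rw [h2]
    rw [← Finset.sum_subtype (univ.filter fun z => p' z ≠ 0) (fun z => by simp)
      (fun z => p' z * a z)]
    exact Finset.sum_filter_of_ne (fun z _ h => by
      intro hz; exact h (by simp [hz]))
  have hP0 : ∀ i, 0 ≤ P i := by
    intro i
    by_cases h : ∃ z, e z = i
    · obtain ⟨z, rfl⟩ := h; rw [hPe]; exact hp'0 _
    · rw [hP, Function.extend_apply' _ _ _ h]; simp
  have hQ0 : ∀ i x, 0 ≤ Q i x := by
    intro i x
    by_cases h : ∃ z, e z = i
    · obtain ⟨z, rfl⟩ := h; rw [hQe]; exact hq'0 _ _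
    · rw [hQ, Function.extend_apply' _ _ _ h]; exact hp0 x
  have hQ1 : ∀ i, ∑ x, Q i x = 1 := by
    intro i
    by_cases h : ∃ z, e z = i
    · obtain ⟨z, rfl⟩ := h; rw [hQe]; exact hq'1 _
    · rw [hQ, Function.extend_apply' _ _ _ h]; exact hp1
  refine ⟨P, Q, hP0, ?_, hQ0, hQ1, ?_, ?_⟩
  · have h := hsum (fun _ => 1) (fun _ => 1) (fun _ => rfl)
    simp only [mul_one] at h
    rw [h]
    exact hp'1
  · intro x
    have h := hsum (fun i => Q i x) (fun z => q' z x)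
      (fun z => by show Q (e z) x = q' z.1 x; rw [hQe])
    rw [h, hmix]
  · exact le_of_eq (hsum (fun i => Θ (Q i)) (fun z => Θ (q' z))
      (fun z => by show Θ (Q (e z)) = Θ (q' z.1); rw [hQe]))

/-- Induction on a bound of the support size. -/
private lemma stmt14_key {𝒳 : Type} [Fintype 𝒳] {n : ℕ} (hn : Fintype.card 𝒳 = n)
    (Θ : (𝒳 → ℝ) → ℝ)
    (p : 𝒳 → ℝ) (hp0 : ∀ x, 0 ≤ p x) (hp1 : ∑ x, p x = 1)
    {𝒵 : Type} [Fintype 𝒵]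
    (q' : 𝒵 → 𝒳 → ℝ) (hq'0 : ∀ z x, 0 ≤ q' z x) (hq'1 : ∀ z, ∑ x, q' z x = 1) :
    ∀ (k : ℕ) (p' : 𝒵 → ℝ), (∀ z, 0 ≤ p' z) → (∑ z, p' z = 1) →
      (∀ x, ∑ z, p' z * q' z x = p x) → Fintype.card {z // p' z ≠ 0} ≤ k →
    ∃ (p'' : Fin n → ℝ) (q'' : Fin n → 𝒳 → ℝ),
      (∀ z, 0 ≤ p'' z) ∧ (∑ z, p'' z = 1) ∧
      (∀ z x, 0 ≤ q'' z x) ∧ (∀ z, ∑ x, q'' z x = 1) ∧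
      (∀ x, ∑ z, p'' z * q'' z x = p x) ∧
      ∑ z, p'' z * Θ (q'' z) ≤ ∑ z, p' z * Θ (q' z) := by
  classical
  intro k
  induction k with
  | zero =>
    intro p' hp'0 hp'1 hmix hc
    exact stmt14_pad Θ p hp0 hp1 p' hp'0 hp'1 q' hq'0 hq'1 hmix (hc.trans (Nat.zero_le n))
  | succ k ih =>
    intro p' hp'0 hp'1 hmix hc
    by_cases hle : Fintype.card {z // p' z ≠ 0} ≤ n
    · exact stmt14_pad Θ p hp0 hp1 p' hp'0 hp'1 q' hq'0 hq'1 hmix hle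
    push_neg at hle
    -- linear dependence of the conditional distributions on the support
    have hdep : ¬ LinearIndependent ℝ (fun z : {z // p' z ≠ 0} => q' z.1) := by
      intro h
      have h2 := h.fintype_card_le_finrank
      rw [Module.finrank_pi, hn] at h2
      omega
    obtain ⟨g, hg0, z₁, hz₁⟩ := Fintype.not_linearIndependent_iff.mp hdep
    set ε0 : 𝒵 → ℝ := fun z => if h : p' z ≠ 0 then g ⟨z, h⟩ else 0 with hε0
    have hεs : ∀ F : 𝒵 → ℝ, ∑ z, ε0 z * F z = ∑ z : {z // p' z ≠ 0}, g z * F z.1 := by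
      intro F
      rw [← Fintype.sum_subtype_add_sum_subtype (fun z => p' z ≠ 0) (fun z => ε0 z * F z)]
      have hA : ∀ z : {z // p' z ≠ 0}, ε0 z.1 * F z.1 = g z * F z.1 := fun z => by
        simp [hε0, z.2]
      have hB : ∀ z : {z // ¬ p' z ≠ 0}, ε0 z.1 * F z.1 = 0 := fun z => by
        have hz : p' z.1 = 0 := not_not.mp z.2
        simp [hε0, hz]
      rw [Finset.sum_congr rfl fun z _ => hA z, Finset.sum_congr rfl fun z _ => hB z]
      simp
    have hε0q : ∀ x, ∑ z, ε0 z * q' z x = 0 := by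
      intro x
      rw [hεs (fun z => q' z x)]
      have := congrFun hg0 x
      simpa [Finset.sum_apply] using this
    have hε0z₁ : ε0 z₁.1 ≠ 0 := by simpa [hε0, z₁.2] using hz₁
    have hε0p : ∀ z, p' z = 0 → ε0 z = 0 := fun z hz => by simp [hε0, hz]
    -- choose the sign so that the Θ-average direction is nonpositive
    obtain ⟨ε, hεq, hεne, hεp, hεΘ⟩ :
        ∃ ε : 𝒵 → ℝ, (∀ x, ∑ z, ε z * q' z x = 0) ∧ (∃ z, ε z ≠ 0) ∧
          (∀ z, p' z = 0 → ε z = 0) ∧ ∑ z, ε z * Θ (q' z) ≤ 0 := by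
      rcases le_or_gt (∑ z, ε0 z * Θ (q' z)) 0 with h | h
      · exact ⟨ε0, hε0q, ⟨z₁.1, hε0z₁⟩, hε0p, h⟩
      · refine ⟨fun z => -ε0 z, fun x => ?_, ⟨z₁.1, by simpa using hε0z₁⟩,
          fun z hz => by simp [hε0p z hz], ?_⟩
        · simp only [neg_mul]
          rw [Finset.sum_neg_distrib, hε0q x, neg_zero]
        · simp only [neg_mul]
          rw [Finset.sum_neg_distrib]
          linarith
    have hεsum0 : ∑ z, ε z = 0 := by
      have h1 : ∑ z, ε z = ∑ z, ε z * ∑ x, q' z x := by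
        refine Finset.sum_congr rfl fun z _ => by rw [hq'1 z, mul_one]
      rw [h1]
      simp_rw [Finset.mul_sum]
      rw [Finset.sum_comm]
      simp [hεq]
    have hneg : ∃ z, ε z < 0 := by
      by_contra h
      push_neg at h
      obtain ⟨z₂, hz₂⟩ := hεne
      exact hz₂ ((Finset.sum_eq_zero_iff_of_nonneg (fun z _ => h z)).mp hεsum0 z₂ (mem_univ _))
    obtain ⟨zneg, hznegneg⟩ := hneg
    obtain ⟨z₀, hz₀T, hz₀min⟩ := Finset.exists_min_image
      (univ.filter fun z => ε z < 0) (fun z => p' z / (-ε z))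
      ⟨zneg, by simp [hznegneg]⟩
    have hz₀ : ε z₀ < 0 := (Finset.mem_filter.mp hz₀T).2
    set t : ℝ := p' z₀ / (-ε z₀) with ht
    have hz₀p : p' z₀ ≠ 0 := fun h => (ne_of_lt hz₀) (hεp z₀ h)
    have hz₀p' : 0 < p' z₀ := lt_of_le_of_ne (hp'0 z₀) (Ne.symm hz₀p)
    have ht0 : 0 < t := div_pos hz₀p' (by linarith)
    set p₂ : 𝒵 → ℝ := fun z => p' z + t * ε z with hp₂
    have hp₂0 : ∀ z, 0 ≤ p₂ z := by
      intro z
      rcases lt_or_ge (ε z) 0 with h | h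
      · have hmem : z ∈ univ.filter fun z => ε z < 0 := by simp [h]
        have h1 : t ≤ p' z / (-ε z) := hz₀min z hmem
        have h2 : t * (-ε z) ≤ p' z := (le_div_iff₀ (by linarith)).mp h1
        simp only [hp₂]
        nlinarith
      · have := mul_nonneg ht0.le h
        simp only [hp₂]
        linarith [hp'0 z]
    have hp₂z₀ : p₂ z₀ = 0 := by
      have hne' : -ε z₀ ≠ 0 := neg_ne_zero.mpr (ne_of_lt hz₀)
      have h2 : t * ε z₀ = -p' z₀ := by
        calc t * ε z₀ = -(p' z₀ / -ε z₀ * -ε z₀) := by rw [ht]; ring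
          _ = -p' z₀ := by rw [div_mul_cancel₀ _ hne']
      simp only [hp₂]
      rw [h2]
      ring
    have hp₂1 : ∑ z, p₂ z = 1 := by
      simp only [hp₂]
      rw [Finset.sum_add_distrib, hp'1, ← Finset.mul_sum, hεsum0, mul_zero, add_zero]
    have hmix₂ : ∀ x, ∑ z, p₂ z * q' z x = p x := by
      intro x
      simp only [hp₂, add_mul]
      rw [Finset.sum_add_distrib, hmix]
      simp_rw [mul_assoc]
      rw [← Finset.mul_sum, hεq x, mul_zero, add_zero]
    have hobj : ∑ z, p₂ z * Θ (q' z) ≤ ∑ z, p' z * Θ (q' z) := by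
      simp only [hp₂, add_mul]
      rw [Finset.sum_add_distrib]
      simp_rw [mul_assoc]
      rw [← Finset.mul_sum]
      nlinarith [mul_nonneg ht0.le (neg_nonneg.mpr hεΘ)]
    have hmono : ∀ z, p₂ z ≠ 0 → p' z ≠ 0 := by
      intro z h hz
      exact h (by simp [hp₂, hz, hεp z hz])
    have hltcard : Fintype.card {z // p₂ z ≠ 0} < Fintype.card {z // p' z ≠ 0} := by
      refine Fintype.card_lt_of_injective_of_notMem
        (fun z => (⟨z.1, hmono z.1 z.2⟩ : {z // p' z ≠ 0}))
        (fun a b hab => by apply Subtype.ext; simpa [Subtype.ext_iff] using hab) (b := ⟨z₀, hz₀p⟩) ?_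
      rintro ⟨⟨z, hz⟩, hzeq⟩
      apply hz
      have hzz : z = z₀ := congrArg Subtype.val hzeq
      rw [hzz]
      exact hp₂z₀
    have hcard₂ : Fintype.card {z // p₂ z ≠ 0} ≤ k := by omega
    obtain ⟨p'', q'', c1, c2, c3, c4, c5, c6⟩ := ih p₂ hp₂0 hp₂1 hmix₂ hcard₂
    exact ⟨p'', q'', c1, c2, c3, c4, c5, c6.trans hobj⟩

/-- Fenchel–Eggleston/Carathéodory reduction: a mixture representation of a fixed marginal `p`
with mixture weights `p'` over an arbitrary finite alphabet `𝒵` can be replaced by one over an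
alphabet of size at most `n = |𝒳|` without increasing the weighted average of a continuous
functional `Θ` on the probability simplex. -/
theorem stmt14 {𝒳 : Type} [Fintype 𝒳] (n : ℕ) (hn : Fintype.card 𝒳 = n)
    (Θ : (𝒳 → ℝ) → ℝ)
    (hΘ : ContinuousOn Θ {t : 𝒳 → ℝ | (∀ x, 0 ≤ t x) ∧ ∑ x, t x = 1})
    (p : 𝒳 → ℝ) (hp0 : ∀ x, 0 ≤ p x) (hp1 : ∑ x, p x = 1)
    {𝒵 : Type} [Fintype 𝒵] (p' : 𝒵 → ℝ) (hp'0 : ∀ z, 0 ≤ p' z) (hp'1 : ∑ z, p' z = 1)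
    (q' : 𝒵 → 𝒳 → ℝ) (hq'0 : ∀ z x, 0 ≤ q' z x) (hq'1 : ∀ z, ∑ x, q' z x = 1)
    (hmix : ∀ x, ∑ z, p' z * q' z x = p x) :
    ∃ (p'' : Fin n → ℝ) (q'' : Fin n → 𝒳 → ℝ),
      (∀ z, 0 ≤ p'' z) ∧ (∑ z, p'' z = 1) ∧
      (∀ z x, 0 ≤ q'' z x) ∧ (∀ z, ∑ x, q'' z x = 1) ∧
      (∀ x, ∑ z, p'' z * q'' z x = p x) ∧
      ∑ z, p'' z * Θ (q'' z) ≤ ∑ z, p' z * Θ (q' z) := by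
  classical
  exact stmt14_key hn Θ p hp0 hp1 q' hq'0 hq'1 (Fintype.card 𝒵) p' hp'0 hp'1 hmix
    (by simpa using Fintype.card_subtype_le _)
end

section
/- Under the product test-channel structure with no extraneous Markov relations, if I(X_I; Z_I | Z_{I^c}, S) = Σ_{i∈I} R_i and I(X_{I'}; Z_{I'} | Z_{I'^c}, S) = Σ_{i∈I'} R_i hold simultaneously for some R in the region B* and disjoint nonempty I, I', then Σ_{i∈I∪I'} R_i < I(X_{I∪I'}; Z_{I∪I'} | Z_{(I∪I')^c}, S), contradicting R ∈ B*. Hence no point of B* can make both constraints active for disjoint I, I'. -/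
open Finset

/-- Probability that a random variable `f` (on finite sample space `Ω` with pmf `μ`)
takes the value `a`. -/
noncomputable def pr {Ω : Type} [Fintype Ω] (μ : Ω → ℝ) {A : Type} [Fintype A] [DecidableEq A]
    (f : Ω → A) (a : A) : ℝ :=
  ∑ ω, if f ω = a then μ ω else 0

/-- Shannon entropy of a finite random variable. -/
noncomputable def ent {Ω : Type} [Fintype Ω] (μ : Ω → ℝ) {A : Type} [Fintype A] [DecidableEq A]
    (f : Ω → A) : ℝ :=
  -∑ a, pr μ f a * Real.log (pr μ f a)

/-- Conditional entropy `H(f | g)`. -/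
noncomputable def condEnt {Ω : Type} [Fintype Ω] (μ : Ω → ℝ) {A B : Type}
    [Fintype A] [DecidableEq A] [Fintype B] [DecidableEq B] (f : Ω → A) (g : Ω → B) : ℝ :=
  ent μ (fun ω => (f ω, g ω)) - ent μ g

/-- Mutual information `I(f ; g)`. -/
noncomputable def mi {Ω : Type} [Fintype Ω] (μ : Ω → ℝ) {A B : Type}
    [Fintype A] [DecidableEq A] [Fintype B] [DecidableEq B] (f : Ω → A) (g : Ω → B) : ℝ :=
  ent μ f + ent μ g - ent μ (fun ω => (f ω, g ω))

/-- Conditional mutual information `I(f ; g | h)`. -/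
noncomputable def cmi {Ω : Type} [Fintype Ω] (μ : Ω → ℝ) {A B C : Type}
    [Fintype A] [DecidableEq A] [Fintype B] [DecidableEq B] [Fintype C] [DecidableEq C]
    (f : Ω → A) (g : Ω → B) (h : Ω → C) : ℝ :=
  ent μ (fun ω => (f ω, h ω)) + ent μ (fun ω => (g ω, h ω))
    - ent μ (fun ω => (f ω, g ω, h ω)) - ent μ h

section ProductStructure

variable {M : ℕ} {𝒳 𝒵 : Fin M → Type} {𝒮 : Type}

/-- Sample space for the multiterminal setup: sources, side information, auxiliaries. -/
abbrev Samp (𝒳 𝒵 : Fin M → Type) (𝒮 : Type) := ((∀ i, 𝒳 i) × 𝒮) × (∀ i, 𝒵 i)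

/-- The joint pmf `p(x_{1..M}, s) ∏ₖ qₖ(z_k | x_k)` (product test-channel structure). -/
noncomputable def jointPMF (p : (∀ i, 𝒳 i) × 𝒮 → ℝ) (q : ∀ i, 𝒳 i → 𝒵 i → ℝ) :
    Samp 𝒳 𝒵 𝒮 → ℝ :=
  fun ω => p ω.1 * ∏ i, q i (ω.1.1 i) (ω.2 i)

/-- The tuple `X_I` of source variables indexed by `I`. -/
def XI (I : Finset (Fin M)) : Samp 𝒳 𝒵 𝒮 → ∀ i : I, 𝒳 i := fun ω i => ω.1.1 i

/-- The tuple `Z_I` of auxiliary variables indexed by `I`. -/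
def ZI (I : Finset (Fin M)) : Samp 𝒳 𝒵 𝒮 → ∀ i : I, 𝒵 i := fun ω i => ω.2 i

/-- The side information variable `S`. -/
def Sv : Samp 𝒳 𝒵 𝒮 → 𝒮 := fun ω => ω.1.2

end ProductStructure

namespace Stmt15Aux
set_option linter.unusedSectionVars false
variable {Ω : Type} [Fintype Ω] {A B : Type} [Fintype A] [DecidableEq A] [Fintype B] [DecidableEq B]

lemma pr_comp_inj (μ : Ω → ℝ) {σ : A → B} (hσ : Function.Injective σ) (f : Ω → A) (a : A) :
    pr μ (fun ω => σ (f ω)) (σ a) = pr μ f a := by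
  unfold pr
  simp only [hσ.eq_iff]

lemma ent_comp_inj (μ : Ω → ℝ) {σ : A → B} (hσ : Function.Injective σ) (f : Ω → A) :
    ent μ (fun ω => σ (f ω)) = ent μ f := by
  have hzero : ∀ b ∈ (univ : Finset B), b ∉ univ.image σ →
      pr μ (fun ω => σ (f ω)) b * Real.log (pr μ (fun ω => σ (f ω)) b) = 0 := by
    intro b _ hb
    have h0 : pr μ (fun ω => σ (f ω)) b = 0 := by
      apply Finset.sum_eq_zero
      intro ω _
      rw [if_neg]
      intro h
      exact hb (Finset.mem_image.mpr ⟨f ω, Finset.mem_univ _, h⟩)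
    simp [h0]
  unfold ent
  congr 1
  rw [← Finset.sum_subset (Finset.subset_univ (univ.image σ)) hzero,
      Finset.sum_image (fun a _ b _ h => hσ h)]
  exact Finset.sum_congr rfl fun a _ => by rw [pr_comp_inj μ hσ]

lemma ent_congr_equiv (μ : Ω → ℝ) (e : A ≃ B) (f : Ω → A) (g : Ω → B)
    (h : ∀ ω, e (f ω) = g ω) : ent μ f = ent μ g := by
  rw [← ent_comp_inj μ e.injective f]
  congr 1
  funext ω
  exact h ω



variable {M : ℕ}

def eSplit {𝒲 : Fin M → Type} (K : Finset (Fin M)) :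
    (∀ i, 𝒲 i) ≃ (∀ i : {x // x ∈ K}, 𝒲 i) × (∀ i : {x // x ∈ Kᶜ}, 𝒲 i) where
  toFun z := (fun i => z i, fun i => z i)
  invFun uv i := if h : i ∈ K then uv.1 ⟨i, h⟩ else uv.2 ⟨i, Finset.mem_compl.mpr h⟩
  left_inv z := by
    funext i
    by_cases h : i ∈ K <;> simp [h]
  right_inv uv := by
    obtain ⟨u, v⟩ := uv
    ext i
    · simp [i.2]
    · have h : (i : Fin M) ∉ K := Finset.mem_compl.mp i.2
      simp [h]

lemma eSplit_symm_apply {𝒲 : Fin M → Type} (K : Finset (Fin M))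
    (uv : (∀ i : {x // x ∈ K}, 𝒲 i) × (∀ i : {x // x ∈ Kᶜ}, 𝒲 i)) (i : Fin M) :
    (eSplit K).symm uv i
      = if h : i ∈ K then uv.1 ⟨i, h⟩ else uv.2 ⟨i, Finset.mem_compl.mpr h⟩ := rfl


lemma sum_prod_pi {ι : Type} [Fintype ι] [DecidableEq ι] {β : ι → Type}
    [∀ i, Fintype (β i)] (f : ∀ i, β i → ℝ) :
    ∑ u : ∀ i, β i, ∏ i, f i (u i) = ∏ i, ∑ t, f i t := by
  rw [Finset.prod_univ_sum, Fintype.piFinset_univ]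

lemma sum_prod_pi_one {ι : Type} [Fintype ι] [DecidableEq ι] {β : ι → Type}
    [∀ i, Fintype (β i)] (f : ∀ i, β i → ℝ) (hf : ∀ i, ∑ t, f i t = 1) :
    ∑ u : ∀ i, β i, ∏ i, f i (u i) = 1 := by
  rw [sum_prod_pi]; simp [hf]

lemma mul_log_mul {x y : ℝ} (hx : 0 ≤ x) (hy : 0 ≤ y) :
    x * y * Real.log (x * y) = x * y * Real.log x + x * y * Real.log y := by
  rcases hx.eq_or_lt with h|h
  · simp [← h]
  rcases hy.eq_or_lt with h'|h'
  · simp [← h']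
  rw [Real.log_mul h.ne' h'.ne', mul_add]

lemma prod_mul_log_prod {ι : Type} [Fintype ι] (t : ι → ℝ) (c : ℝ) :
    c * (∏ i, t i) * Real.log (∏ i, t i) = ∑ i, c * (∏ j, t j) * Real.log (t i) := by
  by_cases h : ∀ i, t i ≠ 0
  · rw [Real.log_prod (fun i _ => h i), Finset.mul_sum]
  · push_neg at h
    obtain ⟨j, hj⟩ := h
    have h0 : ∏ i, t i = 0 := Finset.prod_eq_zero (Finset.mem_univ j) hj
    simp [h0]

lemma sum_prod_pi_single {ι : Type} [Fintype ι] [DecidableEq ι] {β : ι → Type}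
    [∀ i, Fintype (β i)] (f : ∀ i, β i → ℝ) (hf : ∀ i, ∑ t, f i t = 1)
    (i₀ : ι) (g : β i₀ → ℝ) :
    ∑ u : ∀ i, β i, (∏ i, f i (u i)) * g (u i₀) = ∑ t, f i₀ t * g t := by
  set F : ∀ j, β j → ℝ := fun j t => if h : j = i₀ then f i₀ (h ▸ t) * g (h ▸ t) else f j t
    with hF
  have hFi₀ : ∀ t : β i₀, F i₀ t = f i₀ t * g t := fun t => by simp [hF]
  have hFne : ∀ j, j ≠ i₀ → ∀ t, F j t = f j t := fun j hj t => by simp [hF, hj]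
  have key : ∀ u : ∀ i, β i, (∏ i, f i (u i)) * g (u i₀) = ∏ i, F i (u i) := by
    intro u
    rw [← Finset.mul_prod_erase univ (fun i => F i (u i)) (Finset.mem_univ i₀),
        ← Finset.mul_prod_erase univ (fun i => f i (u i)) (Finset.mem_univ i₀)]
    have he : ∏ i ∈ univ.erase i₀, F i (u i) = ∏ i ∈ univ.erase i₀, f i (u i) :=
      Finset.prod_congr rfl fun j hj => hFne j (Finset.ne_of_mem_erase hj) _
    rw [he, hFi₀]
    ring
  calc ∑ u : ∀ i, β i, (∏ i, f i (u i)) * g (u i₀)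
      = ∑ u : ∀ i, β i, ∏ i, F i (u i) := Finset.sum_congr rfl fun u _ => key u
    _ = ∏ i, ∑ t, F i t := sum_prod_pi F
    _ = (∑ t, F i₀ t) * ∏ i ∈ univ.erase i₀, ∑ t, F i t := by
        rw [← Finset.mul_prod_erase univ (fun i => ∑ t, F i t) (Finset.mem_univ i₀)]
    _ = ∑ t, f i₀ t * g t := by
        have h1 : ∏ i ∈ univ.erase i₀, ∑ t, F i t = 1 := by
          apply Finset.prod_eq_one
          intro j hj
          rw [Finset.sum_congr rfl fun t _ => hFne j (Finset.ne_of_mem_erase hj) t]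
          exact hf j
        rw [h1, mul_one]
        exact Finset.sum_congr rfl fun t _ => hFi₀ t

lemma eSplit_symm_mem {𝒲 : Fin M → Type} {K : Finset (Fin M)}
    (u : ∀ i : {x // x ∈ K}, 𝒲 i) (v : ∀ i : {x // x ∈ Kᶜ}, 𝒲 i) (i : {x // x ∈ K}) :
    (eSplit K).symm (u, v) ↑i = u i := by
  rw [eSplit_symm_apply, dif_pos i.2]

lemma eSplit_symm_not_mem {𝒲 : Fin M → Type} {K : Finset (Fin M)}
    (u : ∀ i : {x // x ∈ K}, 𝒲 i) (v : ∀ i : {x // x ∈ Kᶜ}, 𝒲 i) (i : {x // x ∈ Kᶜ}) :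
    (eSplit K).symm (u, v) ↑i = v i := by
  rw [eSplit_symm_apply, dif_neg (Finset.mem_compl.mp i.2)]


section Channel

variable {𝒳 𝒵 : Fin M → Type} {𝒮 : Type}
  [∀ i, Fintype (𝒳 i)] [∀ i, DecidableEq (𝒳 i)]
  [∀ i, Fintype (𝒵 i)] [∀ i, DecidableEq (𝒵 i)] [Fintype 𝒮] [DecidableEq 𝒮]
  (p : (∀ i, 𝒳 i) × 𝒮 → ℝ) (q : ∀ i, 𝒳 i → 𝒵 i → ℝ)

noncomputable def chanH (i : Fin M) : ℝ :=
  -∑ x : ∀ j, 𝒳 j, ∑ s : 𝒮, p (x, s) * ∑ z, q i (x i) z * Real.log (q i (x i) z)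

noncomputable def marg (K : Finset (Fin M)) (a : ∀ i : {x // x ∈ K}, 𝒳 i) (s : 𝒮) : ℝ :=
  ∑ x : ∀ i, 𝒳 i, if (fun i : {x // x ∈ K} => x i) = a then p (x, s) else 0

noncomputable def rK (K : Finset (Fin M)) (a : ∀ i : {x // x ∈ K}, 𝒳 i)
    (b : ∀ i : {x // x ∈ Kᶜ}, 𝒵 i) (s : 𝒮) : ℝ :=
  ∑ x : ∀ i, 𝒳 i, if (fun i : {x // x ∈ K} => x i) = a
    then p (x, s) * ∏ i : {x // x ∈ Kᶜ}, q i (x i) (b i) else 0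

lemma rK_nonneg (hp0 : ∀ a, 0 ≤ p a) (hq0 : ∀ i x z, 0 ≤ q i x z)
    (K : Finset (Fin M)) (a : ∀ i : {x // x ∈ K}, 𝒳 i)
    (b : ∀ i : {x // x ∈ Kᶜ}, 𝒵 i) (s : 𝒮) : 0 ≤ rK p q K a b s := by
  apply Finset.sum_nonneg
  intro x _
  split
  · exact mul_nonneg (hp0 _) (Finset.prod_nonneg fun i _ => hq0 _ _ _)
  · exact le_rfl

lemma rK_marg (hq1 : ∀ i x, ∑ z, q i x z = 1)
    (K : Finset (Fin M)) (a : ∀ i : {x // x ∈ K}, 𝒳 i) (s : 𝒮) :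
    ∑ b : ∀ i : {x // x ∈ Kᶜ}, 𝒵 i, rK p q K a b s = marg p K a s := by
  unfold rK marg
  rw [Finset.sum_comm]
  apply Finset.sum_congr rfl
  intro x _
  by_cases hx : (fun i : {x // x ∈ K} => x i) = a
  · simp only [if_pos hx, ← Finset.mul_sum]
    rw [sum_prod_pi_one (fun (i : {x // x ∈ Kᶜ}) t => q i (x i) t) (fun i => hq1 _ _), mul_one]
  · simp [hx]


lemma eSplit_symm_restr {𝒲 : Fin M → Type} (K : Finset (Fin M))
    (u : ∀ i : {x // x ∈ K}, 𝒲 i) (v : ∀ i : {x // x ∈ Kᶜ}, 𝒲 i) :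
    (fun i : {x // x ∈ Kᶜ} => (eSplit K).symm (u, v) i) = v := by
  funext i
  rw [eSplit_symm_apply, dif_neg (Finset.mem_compl.mp i.2)]

lemma prod_eSplit_symm (f : ∀ i, 𝒵 i → ℝ) (K : Finset (Fin M))
    (u : ∀ i : {x // x ∈ K}, 𝒵 i) (v : ∀ i : {x // x ∈ Kᶜ}, 𝒵 i) :
    ∏ i, f i ((eSplit K).symm (u, v) i)
      = (∏ i : {x // x ∈ K}, f i (u i)) * ∏ i : {x // x ∈ Kᶜ}, f i (v i) := by
  rw [← Finset.prod_mul_prod_compl K (fun i => f i ((eSplit K).symm (u, v) i)),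
      ← Finset.prod_coe_sort K, ← Finset.prod_coe_sort Kᶜ]
  congr 1
  · exact Finset.prod_congr rfl fun i _ => by rw [eSplit_symm_apply, dif_pos i.2]
  · exact Finset.prod_congr rfl fun i _ => by
      rw [eSplit_symm_apply, dif_neg (Finset.mem_compl.mp i.2)]

lemma pr_G (hq1 : ∀ i x, ∑ z, q i x z = 1) (K : Finset (Fin M))
    (a : ∀ i : {x // x ∈ K}, 𝒳 i) (b : ∀ i : {x // x ∈ Kᶜ}, 𝒵 i) (s : 𝒮) :
    pr (jointPMF p q) (fun ω : Samp 𝒳 𝒵 𝒮 => (XI K ω, ZI Kᶜ ω, Sv ω)) (a, b, s)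
      = rK p q K a b s := by
  unfold pr jointPMF XI ZI Sv rK
  rw [Fintype.sum_prod_type, Fintype.sum_prod_type]
  apply Finset.sum_congr rfl
  intro x _
  simp only [Prod.mk.injEq, ite_and]
  by_cases hx : (fun i : {x // x ∈ K} => x i) = a
  · simp only [if_pos hx]
    rw [Finset.sum_comm]
    have step1 : ∀ z' : ∀ i, 𝒵 i,
        (∑ s' : 𝒮, if (fun i : {x // x ∈ Kᶜ} => z' i) = b
            then (if s' = s then p (x, s') * ∏ i, q i (x i) (z' i) else 0) else 0)
          = (if (fun i : {x // x ∈ Kᶜ} => z' i) = b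
            then p (x, s) * ∏ i, q i (x i) (z' i) else 0) := by
      intro z'
      by_cases hz : (fun i : {x // x ∈ Kᶜ} => z' i) = b <;> simp [hz]
    rw [Finset.sum_congr rfl fun z' _ => step1 z',
        ← Equiv.sum_comp (eSplit (𝒲 := 𝒵) K).symm, Fintype.sum_prod_type]
    have step2 : ∀ (u : ∀ i : {x // x ∈ K}, 𝒵 i) (v : ∀ i : {x // x ∈ Kᶜ}, 𝒵 i),
        (if (fun i : {x // x ∈ Kᶜ} => (eSplit K).symm (u, v) i) = b
            then p (x, s) * ∏ i, q i (x i) ((eSplit K).symm (u, v) i) else 0)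
          = (if v = b then (p (x, s) * ∏ i : {x // x ∈ Kᶜ}, q i (x i) (v i))
              * ∏ i : {x // x ∈ K}, q i (x i) (u i) else 0) := by
      intro u v
      rw [eSplit_symm_restr, prod_eSplit_symm]
      by_cases hv : v = b
      · rw [if_pos hv, if_pos hv]; ring
      · rw [if_neg hv, if_neg hv]
    rw [Finset.sum_congr rfl fun u _ => Finset.sum_congr rfl fun v _ => step2 u v]
    simp only [Finset.sum_ite_eq', Finset.mem_univ, if_true]
    rw [← Finset.mul_sum, sum_prod_pi_one (fun (i : {x // x ∈ K}) t => q i (x i) t)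
        (fun i => hq1 _ _), mul_one]
  · simp [hx]

lemma pr_F (K : Finset (Fin M)) (a : ∀ i : {x // x ∈ K}, 𝒳 i) (z : ∀ i, 𝒵 i) (s : 𝒮) :
    pr (jointPMF p q) (fun ω : Samp 𝒳 𝒵 𝒮 => (XI K ω, ω.2, Sv ω)) (a, z, s)
      = (∏ i : {x // x ∈ K}, q i (a i) (z i))
        * rK p q K a (fun i : {x // x ∈ Kᶜ} => z i) s := by
  unfold pr jointPMF XI Sv rK
  rw [Fintype.sum_prod_type, Fintype.sum_prod_type, Finset.mul_sum]
  apply Finset.sum_congr rfl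
  intro x _
  simp only [Prod.mk.injEq, ite_and]
  by_cases hx : (fun i : {x // x ∈ K} => x i) = a
  · simp only [if_pos hx]
    rw [Finset.sum_comm]
    have step1 : ∀ z' : ∀ i, 𝒵 i,
        (∑ s' : 𝒮, if z' = z then (if s' = s then p (x, s') * ∏ i, q i (x i) (z' i) else 0) else 0)
          = (if z' = z then p (x, s) * ∏ i, q i (x i) (z' i) else 0) := by
      intro z'
      by_cases hz : z' = z <;> simp [hz]
    rw [Finset.sum_congr rfl fun z' _ => step1 z',
        Finset.sum_ite_eq' univ z (fun z' => p (x, s) * ∏ i, q i (x i) (z' i))]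
    simp only [Finset.mem_univ, if_true]
    rw [← Finset.prod_mul_prod_compl K (fun i => q i (x i) (z i)),
        ← Finset.prod_coe_sort K (fun i => q i (x i) (z i)),
        ← Finset.prod_coe_sort Kᶜ (fun i => q i (x i) (z i))]
    have hxa : ∏ i : {x // x ∈ K}, q i (x i) (z i) = ∏ i : {x // x ∈ K}, q i (a i) (z i) :=
      Finset.prod_congr rfl fun i _ => by rw [congrFun hx i]
    rw [hxa]
    ring
  · simp [hx]


noncomputable def QK (K : Finset (Fin M)) (a : ∀ i : {x // x ∈ K}, 𝒳 i)
    (u : ∀ i : {x // x ∈ K}, 𝒵 i) : ℝ :=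
  ∏ i : {x // x ∈ K}, q i (a i) (u i)

lemma QK_def (K : Finset (Fin M)) (a : ∀ i : {x // x ∈ K}, 𝒳 i)
    (u : ∀ i : {x // x ∈ K}, 𝒵 i) :
    QK q K a u = ∏ i : {x // x ∈ K}, q i (a i) (u i) := rfl

lemma QK_nonneg (hq0 : ∀ i x z, 0 ≤ q i x z) (K : Finset (Fin M))
    (a : ∀ i : {x // x ∈ K}, 𝒳 i) (u : ∀ i : {x // x ∈ K}, 𝒵 i) :
    0 ≤ QK q K a u :=
  Finset.prod_nonneg fun i _ => hq0 _ _ _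

lemma QK_sum_one (hq1 : ∀ i x, ∑ z, q i x z = 1) (K : Finset (Fin M))
    (a : ∀ i : {x // x ∈ K}, 𝒳 i) :
    ∑ u : ∀ i : {x // x ∈ K}, 𝒵 i, QK q K a u = 1 :=
  sum_prod_pi_one (fun (i : {x // x ∈ K}) t => q i (a i) t) (fun i => hq1 _ _)

noncomputable def LL (i : Fin M) (xi : 𝒳 i) : ℝ :=
  ∑ z, q i xi z * Real.log (q i xi z)

lemma chanH_LL (i : Fin M) :
    chanH p q i = -∑ x : ∀ j, 𝒳 j, ∑ s : 𝒮, p (x, s) * LL q i (x i) := rfl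

lemma QK_log_sum (hq1 : ∀ i x, ∑ z, q i x z = 1) (K : Finset (Fin M))
    (a : ∀ i : {x // x ∈ K}, 𝒳 i) (i₀ : {x // x ∈ K}) :
    ∑ u : ∀ i : {x // x ∈ K}, 𝒵 i, QK q K a u * Real.log (q i₀ (a i₀) (u i₀))
      = LL q i₀ (a i₀) :=
  sum_prod_pi_single (fun (i : {x // x ∈ K}) t => q i (a i) t) (fun i => hq1 _ _) i₀
    (fun t => Real.log (q i₀ (a i₀) t))

lemma key_split (hp0 : ∀ a, 0 ≤ p a) (hq0 : ∀ i x z, 0 ≤ q i x z)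
    (hq1 : ∀ i x, ∑ z, q i x z = 1) (K : Finset (Fin M)) :
    ent (jointPMF p q) (fun ω : Samp 𝒳 𝒵 𝒮 => (XI K ω, ω.2, Sv ω))
      = ent (jointPMF p q) (fun ω : Samp 𝒳 𝒵 𝒮 => (XI K ω, ZI Kᶜ ω, Sv ω))
        + ∑ i ∈ K, chanH p q i := by
  have hG : ent (jointPMF p q) (fun ω : Samp 𝒳 𝒵 𝒮 => (XI K ω, ZI Kᶜ ω, Sv ω))
      = -∑ a, ∑ b, ∑ s, rK p q K a b s * Real.log (rK p q K a b s) := by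
    unfold ent
    congr 1
    rw [Fintype.sum_prod_type]
    refine Finset.sum_congr rfl fun a _ => ?_
    rw [Fintype.sum_prod_type]
    exact Finset.sum_congr rfl fun b _ => Finset.sum_congr rfl fun s _ => by
      rw [pr_G p q hq1]
  have hF : ent (jointPMF p q) (fun ω : Samp 𝒳 𝒵 𝒮 => (XI K ω, ω.2, Sv ω))
      = -∑ a, ∑ u, ∑ v, ∑ s,
          (QK q K a u * rK p q K a v s) * Real.log (QK q K a u * rK p q K a v s) := by
    unfold ent
    congr 1
    rw [Fintype.sum_prod_type]
    refine Finset.sum_congr rfl fun a _ => ?_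
    rw [Fintype.sum_prod_type, ← Equiv.sum_comp (eSplit (𝒲 := 𝒵) K).symm,
        Fintype.sum_prod_type]
    refine Finset.sum_congr rfl fun u _ => Finset.sum_congr rfl fun v _ =>
      Finset.sum_congr rfl fun s _ => ?_
    rw [pr_F, QK_def]
    simp only [eSplit_symm_mem, eSplit_symm_not_mem]
  have step1 : ∀ a u v s, (QK q K a u * rK p q K a v s)
        * Real.log (QK q K a u * rK p q K a v s)
      = QK q K a u * rK p q K a v s * Real.log (QK q K a u)
        + QK q K a u * rK p q K a v s * Real.log (rK p q K a v s) :=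
    fun a u v s => mul_log_mul (QK_nonneg q hq0 K a u) (rK_nonneg p q hp0 hq0 K a v s)
  have hE2 : ∀ a : ∀ i : {x // x ∈ K}, 𝒳 i,
      (∑ u, ∑ v, ∑ s, QK q K a u * rK p q K a v s * Real.log (rK p q K a v s))
        = ∑ v, ∑ s, rK p q K a v s * Real.log (rK p q K a v s) := by
    intro a
    calc ∑ u, ∑ v, ∑ s, QK q K a u * rK p q K a v s * Real.log (rK p q K a v s)
        = ∑ u : ∀ i : {x // x ∈ K}, 𝒵 i, QK q K a u
            * ∑ v, ∑ s, rK p q K a v s * Real.log (rK p q K a v s) := by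
          refine Finset.sum_congr rfl fun u _ => ?_
          rw [Finset.mul_sum]
          exact Finset.sum_congr rfl fun v _ => by
            rw [Finset.mul_sum]
            exact Finset.sum_congr rfl fun s _ => mul_assoc _ _ _
      _ = (∑ u : ∀ i : {x // x ∈ K}, 𝒵 i, QK q K a u)
            * ∑ v, ∑ s, rK p q K a v s * Real.log (rK p q K a v s) := by
          rw [← Finset.sum_mul]
      _ = ∑ v, ∑ s, rK p q K a v s * Real.log (rK p q K a v s) := by
          rw [QK_sum_one q hq1, one_mul]
  have hE1 : (∑ a, ∑ u, ∑ v, ∑ s, QK q K a u * rK p q K a v s * Real.log (QK q K a u))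
      = -∑ i ∈ K, chanH p q i := by
    have perA : ∀ a : ∀ i : {x // x ∈ K}, 𝒳 i,
        (∑ u, ∑ v, ∑ s, QK q K a u * rK p q K a v s * Real.log (QK q K a u))
          = ∑ i : {x // x ∈ K}, (∑ s, marg p K a s) * LL q i (a i) := by
      intro a
      have stepA : ∀ u, (∑ v, ∑ s, QK q K a u * rK p q K a v s * Real.log (QK q K a u))
          = (∑ s, marg p K a s) * (QK q K a u * Real.log (QK q K a u)) := by
        intro u
        calc (∑ v, ∑ s, QK q K a u * rK p q K a v s * Real.log (QK q K a u))
            = ∑ v, ∑ s, (QK q K a u * Real.log (QK q K a u)) * rK p q K a v s :=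
              Finset.sum_congr rfl fun v _ => Finset.sum_congr rfl fun s _ => by ring
          _ = ∑ s, ∑ v, (QK q K a u * Real.log (QK q K a u)) * rK p q K a v s :=
              Finset.sum_comm
          _ = ∑ s, (QK q K a u * Real.log (QK q K a u)) * marg p K a s := by
              refine Finset.sum_congr rfl fun s _ => ?_
              rw [← Finset.mul_sum, rK_marg p q hq1]
          _ = (∑ s, marg p K a s) * (QK q K a u * Real.log (QK q K a u)) := by
              rw [← Finset.mul_sum]; ring
      rw [Finset.sum_congr rfl fun u _ => stepA u]
      calc ∑ u, (∑ s, marg p K a s) * (QK q K a u * Real.log (QK q K a u))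
          = ∑ u, ∑ i : {x // x ∈ K},
              (∑ s, marg p K a s) * QK q K a u * Real.log (q i (a i) (u i)) := by
            refine Finset.sum_congr rfl fun u _ => ?_
            rw [← mul_assoc]
            exact prod_mul_log_prod (fun i : {x // x ∈ K} => q i (a i) (u i)) _
        _ = ∑ i : {x // x ∈ K}, ∑ u,
              (∑ s, marg p K a s) * QK q K a u * Real.log (q i (a i) (u i)) :=
            Finset.sum_comm
        _ = ∑ i : {x // x ∈ K}, (∑ s, marg p K a s) * LL q i (a i) := by
            refine Finset.sum_congr rfl fun i _ => ?_
            rw [← QK_log_sum q hq1 K a i, Finset.mul_sum]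
            exact Finset.sum_congr rfl fun u _ => by ring
    rw [Finset.sum_congr rfl fun a _ => perA a, Finset.sum_comm,
        ← Finset.sum_coe_sort K (fun i => chanH p q i), ← Finset.sum_neg_distrib]
    refine Finset.sum_congr rfl fun i _ => ?_
    rw [chanH_LL, neg_neg]
    calc ∑ a, (∑ s, marg p K a s) * LL q i (a i)
        = ∑ a, ∑ s, marg p K a s * LL q i (a i) :=
          Finset.sum_congr rfl fun a _ => Finset.sum_mul _ _ _
      _ = ∑ s, ∑ a, marg p K a s * LL q i (a i) := Finset.sum_comm
      _ = ∑ s, ∑ x, p (x, s) * LL q i (x i) := by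
          refine Finset.sum_congr rfl fun s _ => ?_
          unfold marg
          calc ∑ a, (∑ x : ∀ j, 𝒳 j, if (fun j : {x // x ∈ K} => x j) = a then p (x, s) else 0)
                  * LL q i (a i)
              = ∑ a, ∑ x : ∀ j, 𝒳 j,
                  (if (fun j : {x // x ∈ K} => x j) = a then p (x, s) * LL q i (a i) else 0) := by
                refine Finset.sum_congr rfl fun a _ => ?_
                rw [Finset.sum_mul]
                exact Finset.sum_congr rfl fun x _ => by rw [ite_mul, zero_mul]
            _ = ∑ x : ∀ j, 𝒳 j, ∑ a,
                  (if (fun j : {x // x ∈ K} => x j) = a then p (x, s) * LL q i (a i) else 0) :=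
                Finset.sum_comm
            _ = ∑ x : ∀ j, 𝒳 j, p (x, s) * LL q i (x i) := by
                refine Finset.sum_congr rfl fun x _ => ?_
                rw [Finset.sum_ite_eq univ (fun j : {x // x ∈ K} => x j)
                    (fun a => p (x, s) * LL q i (a i))]
                simp
      _ = ∑ x : ∀ j, 𝒳 j, ∑ s, p (x, s) * LL q i (x i) := Finset.sum_comm
  rw [hF, hG]
  simp only [step1, Finset.sum_add_distrib]
  rw [hE1, Finset.sum_congr rfl fun a _ => hE2 a]
  ring

end Channel

def eSplitT {𝒲 : Fin M → Type} (A B T : Finset (Fin M)) (hA : A ⊆ T) (hB : B ⊆ T)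
    (hcov : ∀ i ∈ T, i ∉ A → i ∈ B) (hd : Disjoint A B) :
    (∀ i : {x // x ∈ T}, 𝒲 i) ≃ (∀ i : {x // x ∈ A}, 𝒲 i) × (∀ i : {x // x ∈ B}, 𝒲 i) where
  toFun z := (fun i => z ⟨i, hA i.2⟩, fun i => z ⟨i, hB i.2⟩)
  invFun uv i := if h : (i : Fin M) ∈ A then uv.1 ⟨i, h⟩ else uv.2 ⟨i, hcov i i.2 h⟩
  left_inv z := by
    funext i
    by_cases h : (i : Fin M) ∈ A <;> simp [h]
  right_inv uv := by
    obtain ⟨u, v⟩ := uv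
    ext i
    · simp [i.2]
    · have h : (i : Fin M) ∉ A := Finset.disjoint_right.mp hd i.2
      simp [h]


section Recode

variable {𝒳 𝒵 : Fin M → Type} {𝒮 : Type}
  [∀ i, Fintype (𝒳 i)] [∀ i, DecidableEq (𝒳 i)]
  [∀ i, Fintype (𝒵 i)] [∀ i, DecidableEq (𝒵 i)] [Fintype 𝒮] [DecidableEq 𝒮]
  (μ : Samp 𝒳 𝒵 𝒮 → ℝ)

def e1 (K : Finset (Fin M)) :
    ((∀ i : {x // x ∈ K}, 𝒵 i) × ((∀ i : {x // x ∈ Kᶜ}, 𝒵 i) × 𝒮)) ≃ ((∀ i, 𝒵 i) × 𝒮) :=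
  (Equiv.prodAssoc _ _ _).symm.trans
    (Equiv.prodCongr (eSplit (𝒲 := 𝒵) K).symm (Equiv.refl 𝒮))

lemma RL1 (K : Finset (Fin M)) :
    ent μ (fun ω => (ZI K ω, (ZI Kᶜ ω, Sv ω))) = ent μ (fun ω => (ω.2, Sv ω)) := by
  refine ent_congr_equiv μ (e1 K) _ _ fun ω => ?_
  show ((eSplit (𝒲 := 𝒵) K).symm (ZI K ω, ZI Kᶜ ω), Sv ω) = (ω.2, Sv ω)
  rw [show (ZI K ω, ZI Kᶜ ω) = eSplit (𝒲 := 𝒵) K ω.2 from rfl, Equiv.symm_apply_apply]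

lemma RL2 (K : Finset (Fin M)) :
    ent μ (fun ω => (XI K ω, ZI K ω, (ZI Kᶜ ω, Sv ω)))
      = ent μ (fun ω => (XI K ω, ω.2, Sv ω)) := by
  refine ent_congr_equiv μ (Equiv.prodCongr (Equiv.refl _) (e1 K)) _ _ fun ω => ?_
  show (XI K ω, ((eSplit (𝒲 := 𝒵) K).symm (ZI K ω, ZI Kᶜ ω), Sv ω)) = (XI K ω, ω.2, Sv ω)
  rw [show (ZI K ω, ZI Kᶜ ω) = eSplit (𝒲 := 𝒵) K ω.2 from rfl, Equiv.symm_apply_apply]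

lemma RL3 (A B T : Finset (Fin M)) (hA : A ⊆ T) (hB : B ⊆ T)
    (hcov : ∀ i ∈ T, i ∉ A → i ∈ B) (hd : Disjoint A B) :
    ent μ (fun ω => (ZI A ω, (ZI B ω, Sv ω))) = ent μ (fun ω => (ZI T ω, Sv ω)) := by
  refine ent_congr_equiv μ
    ((Equiv.prodAssoc _ _ _).symm.trans
      (Equiv.prodCongr (eSplitT (𝒲 := 𝒵) A B T hA hB hcov hd).symm (Equiv.refl 𝒮)))
    _ _ fun ω => ?_
  show ((eSplitT (𝒲 := 𝒵) A B T hA hB hcov hd).symm (ZI A ω, ZI B ω), Sv ω) = (ZI T ω, Sv ω)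
  rw [show (ZI A ω, ZI B ω) = eSplitT (𝒲 := 𝒵) A B T hA hB hcov hd (ZI T ω) from rfl,
      Equiv.symm_apply_apply]

lemma RL5 (I I' : Finset (Fin M)) (hd : Disjoint I I') :
    ent μ (fun ω => (ZI I ω, ZI I' ω, (ZI (I ∪ I')ᶜ ω, Sv ω)))
      = ent μ (fun ω => (ω.2, Sv ω)) := by
  have hA : I ⊆ I ∪ I' := Finset.subset_union_left
  have hB : I' ⊆ I ∪ I' := Finset.subset_union_right
  have hcov : ∀ i ∈ I ∪ I', i ∉ I → i ∈ I' := fun i hi hni =>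
    (Finset.mem_union.mp hi).resolve_left hni
  refine ent_congr_equiv μ
    ((Equiv.prodAssoc _ _ _).symm.trans
      ((Equiv.prodCongr (eSplitT (𝒲 := 𝒵) I I' (I ∪ I') hA hB hcov hd).symm
        (Equiv.refl _)).trans (e1 (I ∪ I'))))
    _ _ fun ω => ?_
  show ((eSplit (𝒲 := 𝒵) (I ∪ I')).symm
      ((eSplitT (𝒲 := 𝒵) I I' (I ∪ I') hA hB hcov hd).symm (ZI I ω, ZI I' ω),
        ZI (I ∪ I')ᶜ ω), Sv ω) = (ω.2, Sv ω)
  rw [show (ZI I ω, ZI I' ω)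
        = eSplitT (𝒲 := 𝒵) I I' (I ∪ I') hA hB hcov hd (ZI (I ∪ I') ω) from rfl,
      Equiv.symm_apply_apply,
      show (ZI (I ∪ I') ω, ZI (I ∪ I')ᶜ ω) = eSplit (𝒲 := 𝒵) (I ∪ I') ω.2 from rfl,
      Equiv.symm_apply_apply]

end Recode
end Stmt15Aux


section Statement

variable {M : ℕ} {𝒳 𝒵 : Fin M → Type} {𝒮 : Type}
  [∀ i, Fintype (𝒳 i)] [∀ i, DecidableEq (𝒳 i)]
  [∀ i, Fintype (𝒵 i)] [∀ i, DecidableEq (𝒵 i)] [Fintype 𝒮] [DecidableEq 𝒮]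

/-- Lemma 2 of the paper (disjoint case): under nondegeneracy, no point of `B*` can make the
constraints for two disjoint nonempty sets `I, I'` simultaneously active. -/
theorem stmt15 (p : (∀ i, 𝒳 i) × 𝒮 → ℝ) (q : ∀ i, 𝒳 i → 𝒵 i → ℝ)
    (hp0 : ∀ a, 0 ≤ p a) (hp1 : ∑ a, p a = 1)
    (hq0 : ∀ i x z, 0 ≤ q i x z) (hq1 : ∀ i x, ∑ z, q i x z = 1)
    -- nondegeneracy: no extraneous Markov chains, so all such conditional informations are positive
    (hnd : ∀ A B : Finset (Fin M), A.Nonempty → B.Nonempty → Disjoint A B →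
      0 < cmi (jointPMF p q) (ZI A) (ZI B) (fun ω => (ZI (A ∪ B)ᶜ ω, Sv ω)))
    (R : Fin M → ℝ)
    -- R ∈ B*
    (hR : ∀ K : Finset (Fin M), K.Nonempty →
      cmi (jointPMF p q) (XI K) (ZI K) (fun ω => (ZI Kᶜ ω, Sv ω)) ≤ ∑ i ∈ K, R i)
    (I I' : Finset (Fin M)) (hI : I.Nonempty) (hI' : I'.Nonempty) (hdisj : Disjoint I I')
    -- both constraints active
    (hactI : cmi (jointPMF p q) (XI I) (ZI I) (fun ω => (ZI Iᶜ ω, Sv ω)) = ∑ i ∈ I, R i)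
    (hactI' : cmi (jointPMF p q) (XI I') (ZI I') (fun ω => (ZI I'ᶜ ω, Sv ω)) = ∑ i ∈ I', R i) :
    False := by
  classical
  have hcmi : ∀ K : Finset (Fin M),
      cmi (jointPMF p q) (XI K) (ZI K) (fun ω => (ZI Kᶜ ω, Sv ω))
        = ent (jointPMF p q) (fun ω : Samp 𝒳 𝒵 𝒮 => (ω.2, Sv ω))
          - (∑ i ∈ K, Stmt15Aux.chanH p q i)
          - ent (jointPMF p q) (fun ω : Samp 𝒳 𝒵 𝒮 => (ZI Kᶜ ω, Sv ω)) := by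
    intro K
    show ent (jointPMF p q) (fun ω : Samp 𝒳 𝒵 𝒮 => (XI K ω, (ZI Kᶜ ω, Sv ω)))
        + ent (jointPMF p q) (fun ω : Samp 𝒳 𝒵 𝒮 => (ZI K ω, (ZI Kᶜ ω, Sv ω)))
        - ent (jointPMF p q) (fun ω : Samp 𝒳 𝒵 𝒮 => (XI K ω, ZI K ω, (ZI Kᶜ ω, Sv ω)))
        - ent (jointPMF p q) (fun ω : Samp 𝒳 𝒵 𝒮 => (ZI Kᶜ ω, Sv ω)) = _
    rw [Stmt15Aux.RL1, Stmt15Aux.RL2, Stmt15Aux.key_split p q hp0 hq0 hq1 K]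
    ring
  have hIsub : I ⊆ I'ᶜ := fun i hi => Finset.mem_compl.mpr (Finset.disjoint_left.mp hdisj hi)
  have hI'sub : I' ⊆ Iᶜ := fun i hi => Finset.mem_compl.mpr (Finset.disjoint_right.mp hdisj hi)
  have hCsubI' : (I ∪ I')ᶜ ⊆ I'ᶜ := Finset.compl_subset_compl.mpr Finset.subset_union_right
  have hCsubI : (I ∪ I')ᶜ ⊆ Iᶜ := Finset.compl_subset_compl.mpr Finset.subset_union_left
  have hcov1 : ∀ i ∈ I'ᶜ, i ∉ I → i ∈ (I ∪ I')ᶜ := fun i hi hni =>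
    Finset.mem_compl.mpr fun hmem => (Finset.mem_union.mp hmem).elim hni (Finset.mem_compl.mp hi)
  have hcov2 : ∀ i ∈ Iᶜ, i ∉ I' → i ∈ (I ∪ I')ᶜ := fun i hi hni =>
    Finset.mem_compl.mpr fun hmem => (Finset.mem_union.mp hmem).elim (Finset.mem_compl.mp hi) hni
  have hdC : Disjoint I (I ∪ I')ᶜ :=
    Finset.disjoint_left.mpr fun i hi hc => Finset.mem_compl.mp hc (Finset.mem_union_left _ hi)
  have hdC' : Disjoint I' (I ∪ I')ᶜ :=
    Finset.disjoint_left.mpr fun i hi hc => Finset.mem_compl.mp hc (Finset.mem_union_right _ hi)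
  have hcmiZ : cmi (jointPMF p q) (ZI I) (ZI I') (fun ω => (ZI (I ∪ I')ᶜ ω, Sv ω))
      = ent (jointPMF p q) (fun ω : Samp 𝒳 𝒵 𝒮 => (ZI I'ᶜ ω, Sv ω))
        + ent (jointPMF p q) (fun ω : Samp 𝒳 𝒵 𝒮 => (ZI Iᶜ ω, Sv ω))
        - ent (jointPMF p q) (fun ω : Samp 𝒳 𝒵 𝒮 => (ω.2, Sv ω))
        - ent (jointPMF p q) (fun ω : Samp 𝒳 𝒵 𝒮 => (ZI (I ∪ I')ᶜ ω, Sv ω)) := by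
    show ent (jointPMF p q) (fun ω : Samp 𝒳 𝒵 𝒮 => (ZI I ω, (ZI (I ∪ I')ᶜ ω, Sv ω)))
        + ent (jointPMF p q) (fun ω : Samp 𝒳 𝒵 𝒮 => (ZI I' ω, (ZI (I ∪ I')ᶜ ω, Sv ω)))
        - ent (jointPMF p q) (fun ω : Samp 𝒳 𝒵 𝒮 => (ZI I ω, ZI I' ω, (ZI (I ∪ I')ᶜ ω, Sv ω)))
        - ent (jointPMF p q) (fun ω : Samp 𝒳 𝒵 𝒮 => (ZI (I ∪ I')ᶜ ω, Sv ω)) = _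
    rw [Stmt15Aux.RL3 (jointPMF p q) I (I ∪ I')ᶜ I'ᶜ hIsub hCsubI' hcov1 hdC,
        Stmt15Aux.RL3 (jointPMF p q) I' (I ∪ I')ᶜ Iᶜ hI'sub hCsubI hcov2 hdC',
        Stmt15Aux.RL5 (jointPMF p q) I I' hdisj]
    try ring
  have hZ := hnd I I' hI hI' hdisj
  rw [hcmiZ] at hZ
  have hU := hR (I ∪ I') (hI.mono Finset.subset_union_left)
  rw [hcmi (I ∪ I')] at hU
  have h1 := hcmi I
  rw [hactI] at h1
  have h2 := hcmi I'
  rw [hactI'] at h2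
  simp only [Finset.sum_union hdisj] at hU
  linarith [h1, h2, hU, hZ]


end Statement
end
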